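/- For a finite poset Σ, the space S_Σ-Hom(I_Σ^{⊗n}, I_Σ) of S_Σ-bimodule maps factoring through I_Σ^{⊗_{S_Σ} n} is spanned by the maps μ_{(σ_0,…,σ_n)} indexed by n-chains of Σ, where μ_{(σ_0,…,σ_n)} sends the basis tensor (β_0,β_1)⊗(β'_1,β_2)⊗⋯⊗(β'_{n-1},β_n) to (σ_0,σ_n) if β_i=β'_i for all i and (β_0,…,β_n)=(σ_0,…,σ_n), and to 0 otherwise. -/

import Mathlib

open Finset

variable {K P : Type} [Field K] [Fintype P] [PartialOrder P] [DecidableEq P]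
  [DecidableRel ((· ≤ ·) : P → P → Prop)]

abbrev IncPair (P : Type) [PartialOrder P] := {p : P × P // p.1 ≤ p.2}

abbrev Inc (K P : Type) [PartialOrder P] := IncPair P → K

noncomputable def incMul (f g : Inc K P) : Inc K P := fun q =>
  ∑ b : P, if h : q.1.1 ≤ b ∧ b ≤ q.1.2
    then f ⟨(q.1.1, b), h.1⟩ * g ⟨(b, q.1.2), h.2⟩ else 0

def incBasis (σ τ : P) : Inc K P := fun q => if q.1 = (σ, τ) then 1 else 0

def incOne : Inc K P := fun q => if q.1.1 = q.1.2 then 1 else 0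

def Chain (P : Type) [PartialOrder P] (n : ℕ) := {f : Fin (n+1) → P // Monotone f}

noncomputable instance (n : ℕ) : Fintype (Chain P n) :=
  Fintype.ofInjective (fun c : Chain P n => c.1) Subtype.val_injective

def face {n : ℕ} (i : Fin (n+2)) (c : Chain P (n+1)) : Chain P n :=
  ⟨c.1 ∘ i.succAbove, c.2.comp (Fin.strictMono_succAbove i).monotone⟩

def degen {n : ℕ} (i : Fin (n+1)) (c : Chain P n) : Chain P (n+1) :=
  ⟨c.1 ∘ i.predAbove, c.2.comp (Fin.predAbove_right_monotone i)⟩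

open scoped TensorProduct

abbrev TP (K P : Type) [Field K] [PartialOrder P] (n : ℕ) :=
  PiTensorProduct K (fun _ : Fin n => Inc K P)

noncomputable def relators (K P : Type) [Field K] [Fintype P] [PartialOrder P] [DecidableEq P]
    [DecidableRel ((· ≤ ·) : P → P → Prop)] (n : ℕ) :
    Submodule K (TP K P n) :=
  Submodule.span K { t | ∃ (v : Fin n → Inc K P) (j j' : Fin n) (σ : P),
    (j:ℕ) + 1 = (j':ℕ) ∧
    t = PiTensorProduct.tprod K (Function.update v j (incMul (v j) (incBasis σ σ)))
      - PiTensorProduct.tprod K (Function.update v j' (incMul (incBasis σ σ) (v j'))) }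

abbrev Q (K P : Type) [Field K] [Fintype P] [PartialOrder P] [DecidableEq P]
    [DecidableRel ((· ≤ ·) : P → P → Prop)] (n : ℕ) :=
  TP K P n ⧸ relators K P n

noncomputable def chainVec {n : ℕ} (c : Chain P n) : Fin n → Inc K P :=
  fun i => incBasis (c.1 i.castSucc) (c.1 i.succ)

noncomputable def chainT {n : ℕ} (c : Chain P n) : TP K P n :=
  PiTensorProduct.tprod K (chainVec c)

noncomputable def chainQ {n : ℕ} (c : Chain P n) : Q K P n :=
  Submodule.Quotient.mk (chainT c)

noncomputable def muM {n : ℕ} (c : Chain P n) :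
    MultilinearMap K (fun _ : Fin n => Inc K P) (Inc K P) :=
  (MultilinearMap.mkPiRing K (Fin n) (incBasis (c.1 0) (c.1 (Fin.last n)))).compLinearMap
    (fun i => LinearMap.proj ⟨(c.1 i.castSucc, c.1 i.succ), c.2 (Fin.castSucc_lt_succ : i.castSucc < i.succ).le⟩)

noncomputable def muL {n : ℕ} (c : Chain P n) : TP K P n →ₗ[K] Inc K P :=
  PiTensorProduct.lift (muM c)

noncomputable def iota {n : ℕ} (f : Chain P n → K) : TP K P n →ₗ[K] Inc K P :=
  ∑ c : Chain P n, f c • muL c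

/-- The property of being a morphism of `S_Σ`-bimodules `I_Σ^{⊗ n} → I_Σ` that factors through
the relative tensor power `I_Σ^{⊗_{S_Σ} n}`: it kills the relators, and it is equivariant for the
left and right `S_Σ`-actions (multiplication by the diagonal idempotents on the first,
resp. last, tensor factor). -/
def IsBM {n : ℕ} (g : TP K P (n+1) →ₗ[K] Inc K P) : Prop :=
  relators K P (n+1) ≤ LinearMap.ker g ∧
  (∀ (v : Fin (n+1) → Inc K P) (σ : P),
    g (PiTensorProduct.tprod K (Function.update v 0 (incMul (incBasis σ σ) (v 0)))) =
      incMul (incBasis σ σ) (g (PiTensorProduct.tprod K v))) ∧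
  (∀ (v : Fin (n+1) → Inc K P) (σ : P),
    g (PiTensorProduct.tprod K
        (Function.update v (Fin.last n) (incMul (v (Fin.last n)) (incBasis σ σ)))) =
      incMul (g (PiTensorProduct.tprod K v)) (incBasis σ σ))

/-! Left (right) multiplication by a diagonal idempotent `(σ, σ)` restricts an element of `I_Σ`
to the pairs starting (ending) at `σ`. So if two adjacent factors `(β₀, β₁) ⊗ (β'₁, β₂)` of a
basis tensor do not compose, moving `(β₁, β₁)` across the tensor sign fixes one side of a relator
and kills the other, and every bimodule map `g` vanishes on that tensor; on the tensor of a chain,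
equivariance at both ends puts the value of `g` on the line spanned by `(σ₀, σₙ)`. Hence `g` is
the combination of the `μ_c` with coefficients the `(σ₀, σₙ)`-entries of its values. -/

section IncidenceAlgebra

omit [DecidableEq P] in
lemma incMul_add (f g h : Inc K P) : incMul f (g + h) = incMul f g + incMul f h := by
  funext q
  simp only [incMul, Pi.add_apply, ← Finset.sum_add_distrib]
  refine Finset.sum_congr rfl fun b _ => ?_
  split_ifs <;> simp [mul_add]

omit [DecidableEq P] in
lemma add_incMul (f g h : Inc K P) : incMul (f + g) h = incMul f h + incMul g h := by
  funext q
  simp only [incMul, Pi.add_apply, ← Finset.sum_add_distrib]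
  refine Finset.sum_congr rfl fun b _ => ?_
  split_ifs <;> simp [add_mul]

omit [DecidableEq P] in
lemma incMul_smul (a : K) (f g : Inc K P) : incMul f (a • g) = a • incMul f g := by
  funext q
  simp only [incMul, Pi.smul_apply, smul_eq_mul, Finset.mul_sum]
  refine Finset.sum_congr rfl fun b _ => ?_
  split_ifs <;> simp [mul_left_comm]

omit [DecidableEq P] in
lemma smul_incMul (a : K) (f g : Inc K P) : incMul (a • f) g = a • incMul f g := by
  funext q
  simp only [incMul, Pi.smul_apply, smul_eq_mul, Finset.mul_sum]
  refine Finset.sum_congr rfl fun b _ => ?_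
  split_ifs <;> simp [mul_assoc]

lemma incMul_incBasis_self_left_apply (σ : P) (f : Inc K P) (q : IncPair P) :
    incMul (incBasis σ σ) f q = if q.1.1 = σ then f q else 0 := by
  obtain ⟨⟨a, b⟩, hab⟩ := q
  simp only [incMul, incBasis, Prod.mk.injEq]
  split_ifs with h
  · subst h
    rw [Finset.sum_eq_single a (by grind) (by simp)]
    simp [hab]
  · exact Finset.sum_eq_zero fun b _ => by grind

lemma incMul_incBasis_self_right_apply (σ : P) (f : Inc K P) (q : IncPair P) :
    incMul f (incBasis σ σ) q = if q.1.2 = σ then f q else 0 := by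
  obtain ⟨⟨a, b⟩, hab⟩ := q
  simp only [incMul, incBasis, Prod.mk.injEq]
  split_ifs with h
  · subst h
    rw [Finset.sum_eq_single b (by grind) (by simp)]
    simp [hab]
  · exact Finset.sum_eq_zero fun b _ => by grind

omit [Fintype P] [DecidableRel ((· ≤ ·) : P → P → Prop)] in
lemma incBasis_eq_single (q : IncPair P) : incBasis q.1.1 q.1.2 = Pi.single q (1 : K) := by
  funext r
  simp only [incBasis, Pi.single_apply, Subtype.ext_iff]

lemma incMul_incBasis_self_incBasis (σ a b : P) :
    incMul (incBasis σ σ) (incBasis a b) = if a = σ then (incBasis a b : Inc K P) else 0 := by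
  funext q
  rw [incMul_incBasis_self_left_apply, apply_ite (fun f : Inc K P => f q)]
  simp only [incBasis, Pi.zero_apply]
  grind

lemma incMul_incBasis_incBasis_self (σ a b : P) :
    incMul (incBasis a b) (incBasis σ σ) = if b = σ then (incBasis a b : Inc K P) else 0 := by
  funext q
  rw [incMul_incBasis_self_right_apply, apply_ite (fun f : Inc K P => f q)]
  simp only [incBasis, Pi.zero_apply]
  grind

lemma eq_smul_incBasis_of_incMul {σ τ : P} (hστ : σ ≤ τ) {f : Inc K P}
    (hl : incMul (incBasis σ σ) f = f) (hr : incMul f (incBasis τ τ) = f) :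
    f = f ⟨(σ, τ), hστ⟩ • incBasis σ τ := by
  funext q
  have hlq := congrFun hl q
  have hrq := congrFun hr q
  rw [incMul_incBasis_self_left_apply] at hlq
  rw [incMul_incBasis_self_right_apply] at hrq
  obtain ⟨⟨a, b⟩, hab⟩ := q
  simp only [Pi.smul_apply, incBasis, smul_eq_mul, Prod.mk.injEq, mul_ite, mul_one, mul_zero]
    at hlq hrq ⊢
  split_ifs at hlq hrq ⊢ with h <;> grind

end IncidenceAlgebra

noncomputable def isBMSubmodule (n : ℕ) : Submodule K (TP K P (n+1) →ₗ[K] Inc K P) where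
  carrier := {g | IsBM g}
  add_mem' := by
    rintro g₁ g₂ ⟨hker₁, hl₁, hr₁⟩ ⟨hker₂, hl₂, hr₂⟩
    refine ⟨fun x hx => ?_, fun v σ => ?_, fun v σ => ?_⟩
    · simp [LinearMap.mem_ker.1 (hker₁ hx), LinearMap.mem_ker.1 (hker₂ hx)]
    · simp only [LinearMap.add_apply, hl₁, hl₂, incMul_add]
    · simp only [LinearMap.add_apply, hr₁, hr₂, add_incMul]
  zero_mem' := by
    refine ⟨fun x _ => rfl, fun v σ => ?_, fun v σ => ?_⟩
    · funext q; simp [incMul_incBasis_self_left_apply]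
    · funext q; simp [incMul_incBasis_self_right_apply]
  smul_mem' := by
    rintro a g ⟨hker, hl, hr⟩
    refine ⟨fun x hx => ?_, fun v σ => ?_, fun v σ => ?_⟩
    · simp [LinearMap.mem_ker.1 (hker hx)]
    · simp only [LinearMap.smul_apply, hl, incMul_smul]
    · simp only [LinearMap.smul_apply, hr, smul_incMul]

section Chains

omit [Fintype P] [DecidableRel ((· ≤ ·) : P → P → Prop)]

namespace Chain

variable {n : ℕ}

def edge (c : Chain P n) (i : Fin n) : IncPair P :=
  ⟨(c.1 i.castSucc, c.1 i.succ), c.2 i.castSucc_le_succ⟩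

def endpoints (c : Chain P n) : IncPair P :=
  ⟨(c.1 0, c.1 (Fin.last n)), c.2 (Fin.zero_le _)⟩

omit [DecidableEq P] in
lemma edge_injective : Function.Injective (edge : Chain P (n+1) → Fin (n+1) → IncPair P) := by
  intro c c' h
  apply Subtype.ext
  funext k
  induction k using Fin.lastCases with
  | last => simpa [edge] using congrArg (fun e => (e (Fin.last n)).1.2) h
  | cast i => exact congrArg (fun e => (e i).1.1) h

omit [DecidableEq P] in
lemma exists_edge_eq (p : Fin (n+1) → IncPair P)
    (hp : ∀ i : Fin n, (p i.castSucc).1.2 = (p i.succ).1.1) :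
    ∃ c : Chain P (n+1), c.edge = p := by
  set f : Fin (n+2) → P := Fin.snoc (fun i => (p i).1.1) (p (Fin.last n)).1.2
  have hf_castSucc (i : Fin (n+1)) : f i.castSucc = (p i).1.1 := Fin.snoc_castSucc ..
  have hf_succ (i : Fin (n+1)) : f i.succ = (p i).1.2 := by
    induction i using Fin.lastCases with
    | last => simp [f]
    | cast i => rw [Fin.succ_castSucc, hf_castSucc, hp]
  refine ⟨⟨f, Fin.monotone_iff_le_succ.2 fun i => ?_⟩, funext fun i => Subtype.ext ?_⟩
  · rw [hf_castSucc, hf_succ]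
    exact (p i).2
  · simp only [edge, hf_castSucc, hf_succ]

lemma chainVec_eq (c : Chain P n) : chainVec c = fun i => Pi.single (c.edge i) (1 : K) :=
  funext fun i => incBasis_eq_single (c.edge i)

end Chain

lemma muL_tprod {n : ℕ} (c : Chain P n) (v : Fin n → Inc K P) :
    muL c (PiTensorProduct.tprod K v) =
      (∏ i, v i (c.edge i)) • incBasis (c.1 0) (c.1 (Fin.last n)) := by
  simp [muL, muM, Chain.edge, MultilinearMap.mkPiRing]

lemma muL_tprod_single {n : ℕ} (c : Chain P n) (p : Fin n → IncPair P) :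
    muL c (PiTensorProduct.tprod K fun i => Pi.single (p i) (1 : K)) =
      if c.edge = p then incBasis (c.1 0) (c.1 (Fin.last n)) else 0 := by
  simp only [muL_tprod, Pi.single_apply, Finset.prod_boole, Finset.mem_univ, true_implies]
  split_ifs <;> simp_all [funext_iff]

lemma muL_tprod_update {n : ℕ} (c : Chain P n) (v : Fin n → Inc K P) (j : Fin n)
    {w : Inc K P} {r : K} (hw : w (c.edge j) = r * v j (c.edge j)) :
    muL c (PiTensorProduct.tprod K (Function.update v j w)) =
      r • muL c (PiTensorProduct.tprod K v) := by
  simp only [muL_tprod, smul_smul, ← Finset.mul_prod_erase _ _ (Finset.mem_univ j),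
    Function.update_self, hw, mul_assoc]
  congr 3
  exact Finset.prod_congr rfl fun i hi => by rw [Function.update_of_ne (Finset.ne_of_mem_erase hi)]

end Chains

lemma isBM_muL {n : ℕ} (c : Chain P (n+1)) : IsBM (muL (K := K) c) := by
  refine ⟨Submodule.span_le.2 ?_, fun v σ => ?_, fun v σ => ?_⟩
  · rintro t ⟨v, j, j', σ, hjj, rfl⟩
    have hj : c.1 j.succ = c.1 j'.castSucc := congrArg c.1 (Fin.ext (by simpa using hjj))
    rw [SetLike.mem_coe, LinearMap.mem_ker, map_sub, sub_eq_zero,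
      muL_tprod_update c v j (r := if c.1 j.succ = σ then 1 else 0) ?_,
      muL_tprod_update c v j' (r := if c.1 j.succ = σ then 1 else 0) ?_]
    · simp only [incMul_incBasis_self_left_apply, Chain.edge, hj]
      split_ifs <;> simp
    · simp only [incMul_incBasis_self_right_apply, Chain.edge]
      split_ifs <;> simp
  · rw [muL_tprod_update c v 0 (r := if c.1 0 = σ then 1 else 0), muL_tprod, incMul_smul,
      incMul_incBasis_self_incBasis]
    · split_ifs <;> simp
    · simp only [incMul_incBasis_self_left_apply, Chain.edge]
      split_ifs <;> simp_all
  · rw [muL_tprod_update c v (Fin.last n) (r := if c.1 (Fin.last (n+1)) = σ then 1 else 0),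
      muL_tprod, smul_incMul, incMul_incBasis_incBasis_self]
    · split_ifs <;> simp
    · simp only [incMul_incBasis_self_right_apply, Chain.edge]
      split_ifs <;> simp_all

lemma map_tprod_eq_zero_of_relators_le_ker {m : ℕ} {g : TP K P m →ₗ[K] Inc K P}
    (hg : relators K P m ≤ LinearMap.ker g) (v : Fin m → Inc K P) {j j' : Fin m}
    (hjj : (j : ℕ) + 1 = j') (σ : P) (hj : incMul (v j) (incBasis σ σ) = v j)
    (hj' : incMul (incBasis σ σ) (v j') = 0) :
    g (PiTensorProduct.tprod K v) = 0 := by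
  have hrel := hg (Submodule.subset_span ⟨v, j, j', σ, hjj, rfl⟩)
  rw [LinearMap.mem_ker, map_sub, sub_eq_zero, hj, Function.update_eq_self, hj',
    MultilinearMap.map_update_zero] at hrel
  rw [hrel, map_zero]

namespace IsBM

variable {n : ℕ} {g : TP K P (n+1) →ₗ[K] Inc K P}

lemma map_chainT (hg : IsBM g) (c : Chain P (n+1)) :
    g (chainT c) = g (chainT c) c.endpoints • incBasis (c.1 0) (c.1 (Fin.last (n+1))) := by
  have hl := hg.2.1 (chainVec c) (c.1 0)
  have hr := hg.2.2 (chainVec c) (c.1 (Fin.last (n+1)))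
  rw [show incMul (incBasis (c.1 0) (c.1 0)) (chainVec c 0) = chainVec (K := K) c 0 from
    (incMul_incBasis_self_incBasis _ _ _).trans (if_pos rfl), Function.update_eq_self] at hl
  rw [show incMul (chainVec c (Fin.last n)) (incBasis (c.1 (Fin.last (n+1))) (c.1 (Fin.last (n+1))))
      = chainVec (K := K) c (Fin.last n) from
    (incMul_incBasis_incBasis_self _ _ _).trans (if_pos rfl), Function.update_eq_self] at hr
  exact eq_smul_incBasis_of_incMul _ hl.symm hr.symm

lemma eq_sum_smul_muL (hg : IsBM g) :
    g = ∑ c : Chain P (n+1), g (chainT c) c.endpoints • muL c := by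
  refine PiTensorProduct.ext (Module.Basis.ext_multilinear (fun _ => Pi.basisFun K (IncPair P))
    fun p => ?_)
  simp only [LinearMap.compMultilinearMap_apply, Pi.basisFun_apply, LinearMap.sum_apply,
    LinearMap.smul_apply, muL_tprod_single]
  by_cases hp : ∃ c : Chain P (n+1), c.edge = p
  · obtain ⟨c, rfl⟩ := hp
    rw [← Chain.chainVec_eq, ← chainT, hg.map_chainT c, Finset.sum_eq_single c, if_pos rfl]
    · exact fun c' _ h => by rw [if_neg (Chain.edge_injective.ne h), smul_zero]
    · simp
  · obtain ⟨i, hi⟩ : ∃ i : Fin n, (p i.castSucc).1.2 ≠ (p i.succ).1.1 := by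
      by_contra! h
      exact hp (Chain.exists_edge_eq p h)
    rw [map_tprod_eq_zero_of_relators_le_ker hg.1 _ (j := i.castSucc) (j' := i.succ) (by simp)
      (p i.castSucc).1.2]
    · exact (Finset.sum_eq_zero fun c _ => by rw [if_neg fun h => hp ⟨c, h⟩, smul_zero]).symm
    · rw [← incBasis_eq_single, incMul_incBasis_incBasis_self, if_pos rfl]
    · rw [← incBasis_eq_single, incMul_incBasis_self_incBasis, if_neg hi.symm]

end IsBM

/-- The space `S_Σ-Hom(I_Σ^{⊗n}, I_Σ)` of `S_Σ`-bimodule maps factoring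
through `I_Σ^{⊗_{S_Σ} n}` is exactly the linear span of the maps `μ_{(σ₀,…,σ_n)}` indexed by
the `n`-chains of `Σ`, where `μ_{(σ₀,…,σ_n)}` sends the basis tensor of an `n`-chain to
`(σ₀,σ_n)` if the chain is `(σ₀,…,σ_n)` and to `0` otherwise. -/
theorem relative_hom_spanned_by_mu (n : ℕ) :
    (Submodule.span K (Set.range (fun c : Chain P (n+1) => muL (K := K) c)) :
        Set (TP K P (n+1) →ₗ[K] Inc K P)) =
      {g | IsBM g} := by
  refine Set.Subset.antisymm ?_ fun g hg => ?_
  · exact (Submodule.span_le (p := isBMSubmodule n)).2 (Set.range_subset_iff.2 isBM_muL)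
  · rw [SetLike.mem_coe, IsBM.eq_sum_smul_muL hg]
    exact Submodule.sum_mem _ fun c _ => Submodule.smul_mem _ _ (Submodule.subset_span ⟨c, rfl⟩)
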